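/- arXiv:2509.12911 — 5 statements merged into one kernel-verified Lean document; each statement's English description precedes it below -/
import Mathlib

section
/- Let H be a complex Hilbert space and let M_A and M_B be commuting von Neumann algebras on H satisfying Haag duality M_B = M_A.commutant. If Ψ, Φ ∈ H satisfy ⟪Ψ, a Ψ⟫ = ⟪Φ, a Φ⟫ for all a ∈ M_A, then there exists a partial isometry v ∈ M_B (i.e. v * (adjoint v) * v = v) with v Ψ = Φ. -/
/-!
Since `M_A` is a *-algebra, the hypothesis gives `‖a Φ‖ = ‖a Ψ‖` for `a ∈ M_A`, so `a Ψ ↦ a Φ`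
is a well-defined isometry on the orbit `M_A Ψ`; it extends to the closure `K` of the orbit, and
extending it by zero on `Kᗮ` gives a partial isometry `v` with `v Ψ = Φ`. As `M_A` is closed under
adjoints, both `K` and `Kᗮ` are `M_A`-invariant, and the isometry intertwines the action of `M_A`;
hence `v` commutes with `M_A`, i.e. `v ∈ M_A' = M_B`.
-/

open scoped InnerProductSpace
noncomputable section

open ContinuousLinearMap Set

variable {𝕜 E F : Type*} [RCLike 𝕜] [NormedAddCommGroup E] [InnerProductSpace 𝕜 E]
  [NormedAddCommGroup F] [InnerProductSpace 𝕜 F]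

namespace Submodule

theorem mapsTo_orthogonal_of_mapsTo_adjoint [CompleteSpace E] (K : Submodule 𝕜 E)
    {a : E →L[𝕜] E} (h : MapsTo (adjoint a) K K) : MapsTo a Kᗮ Kᗮ := by
  intro z hz
  refine (mem_orthogonal K (a z)).2 fun u hu => ?_
  rw [← adjoint_inner_left]
  exact hz _ (h hu)

theorem starProjection_map_of_mapsTo [CompleteSpace E] (K : Submodule 𝕜 E)
    [K.HasOrthogonalProjection] {a : E →L[𝕜] E} (ha : MapsTo a K K)
    (ha' : MapsTo (adjoint a) K K) (x : E) :
    K.starProjection (a x) = a (K.starProjection x) := by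
  refine eq_starProjection_of_mem_orthogonal (ha (K.starProjection_apply_mem x)) ?_
  rw [← map_sub]
  exact K.mapsTo_orthogonal_of_mapsTo_adjoint ha' (K.sub_starProjection_mem_orthogonal x)

end Submodule

namespace LinearIsometry

variable {K : Submodule 𝕜 E} [K.HasOrthogonalProjection]

def extendByZero (W : K →ₗᵢ[𝕜] F) : E →L[𝕜] F :=
  W.toContinuousLinearMap ∘L K.orthogonalProjectionOnto

theorem extendByZero_apply (W : K →ₗᵢ[𝕜] F) (x : E) :
    W.extendByZero x = W (K.orthogonalProjectionOnto x) := rfl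

theorem extendByZero_apply_of_mem (W : K →ₗᵢ[𝕜] F) (x : K) : W.extendByZero x = W x := by
  rw [extendByZero_apply, K.orthogonalProjectionOnto_mem_subspace_eq_self]

theorem extendByZero_comp_adjoint_comp_self [CompleteSpace E] [CompleteSpace F]
    [CompleteSpace K] (W : K →ₗᵢ[𝕜] F) :
    W.extendByZero ∘L adjoint W.extendByZero ∘L W.extendByZero = W.extendByZero := by
  have hadj : adjoint W.extendByZero = K.subtypeL ∘L adjoint W.toContinuousLinearMap := by
    rw [extendByZero, adjoint_comp, K.adjoint_orthogonalProjectionOnto]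
  ext x
  have hW := congr($(W.adjoint_comp_self) (K.orthogonalProjectionOnto x))
  simp only [comp_apply, hadj, K.subtypeL_apply, extendByZero_apply_of_mem] at hW ⊢
  rw [extendByZero_apply, ← coe_toContinuousLinearMap, hW, one_apply_eq_self]

theorem extendByZero_comp_of_mapsTo [CompleteSpace E] (W : K →ₗᵢ[𝕜] F) {a : E →L[𝕜] E}
    {b : F →L[𝕜] F} (ha : MapsTo a K K) (ha' : MapsTo (adjoint a) K K)
    (hW : ∀ x : K, W ⟨a x, ha x.2⟩ = b (W x)) :
    W.extendByZero ∘L a = b ∘L W.extendByZero := by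
  ext x
  have hP : K.orthogonalProjectionOnto (a x) =
      ⟨a (K.starProjection x), ha (K.starProjection_apply_mem x)⟩ :=
    Subtype.ext (K.starProjection_map_of_mapsTo ha ha' x)
  simp only [comp_apply, extendByZero_apply, hP]
  exact hW _

end LinearIsometry

namespace StarSubalgebra

variable [CompleteSpace E] (A : StarSubalgebra 𝕜 (E →L[𝕜] E))

def orbitMap (Ψ : E) : A →ₗ[𝕜] E where
  toFun a := (a : E →L[𝕜] E) Ψ
  map_add' _ _ := rfl
  map_smul' _ _ := rfl

def cyclicSubspace (Ψ : E) : Submodule 𝕜 E :=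
  (LinearMap.range (A.orbitMap Ψ)).topologicalClosure

instance (Ψ : E) : CompleteSpace (A.cyclicSubspace Ψ) :=
  (LinearMap.range (A.orbitMap Ψ)).isClosed_topologicalClosure.completeSpace_coe

theorem orbitMap_mem_cyclicSubspace (Ψ : E) (a : A) : A.orbitMap Ψ a ∈ A.cyclicSubspace Ψ :=
  Submodule.le_topologicalClosure _ (LinearMap.mem_range_self _ a)

theorem mapsTo_cyclicSubspace (Ψ : E) {a : E →L[𝕜] E} (ha : a ∈ A) :
    MapsTo a (A.cyclicSubspace Ψ) (A.cyclicSubspace Ψ) := by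
  have hrange :
      MapsTo a (LinearMap.range (A.orbitMap Ψ)) (LinearMap.range (A.orbitMap Ψ)) := by
    rintro _ ⟨b, rfl⟩
    exact ⟨⟨a * b, mul_mem ha b.2⟩, rfl⟩
  simpa only [cyclicSubspace, Submodule.topologicalClosure_coe] using
    hrange.closure a.continuous

def orbitMapCyclic (Ψ : E) : A →ₗ[𝕜] A.cyclicSubspace Ψ :=
  (A.orbitMap Ψ).codRestrict _ (A.orbitMap_mem_cyclicSubspace Ψ)

theorem denseRange_orbitMapCyclic (Ψ : E) : DenseRange (A.orbitMapCyclic Ψ) := by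
  rw [DenseRange, Subtype.dense_iff, ← range_comp]
  change _ ⊆ closure (range (A.orbitMap Ψ))
  rw [cyclicSubspace, Submodule.topologicalClosure_coe, LinearMap.coe_range]

variable {A} {Ψ Φ : E}

theorem norm_apply_eq_of_inner_eq (h : ∀ a ∈ A, ⟪Ψ, a Ψ⟫_𝕜 = ⟪Φ, a Φ⟫_𝕜) (a : A) :
    ‖(a : E →L[𝕜] E) Φ‖ = ‖(a : E →L[𝕜] E) Ψ‖ := by
  have hsq (x : E) :
      (‖(a : E →L[𝕜] E) x‖ ^ 2 : 𝕜) = ⟪x, (star (a : E →L[𝕜] E) * a) x⟫_𝕜 := by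
    rw [mul_apply_eq_comp, star_eq_adjoint, adjoint_inner_right, inner_self_eq_norm_sq_to_K]
  have h2 : ‖(a : E →L[𝕜] E) Φ‖ ^ 2 = ‖(a : E →L[𝕜] E) Ψ‖ ^ 2 := by
    exact_mod_cast
      (hsq Φ).trans ((h _ (mul_mem (star_mem a.2) a.2)).symm.trans (hsq Ψ).symm)
  exact (sq_eq_sq₀ (norm_nonneg _) (norm_nonneg _)).1 h2

theorem extendOfNorm_orbitMapCyclic
    (hnorm : ∀ a : A, ‖(a : E →L[𝕜] E) Φ‖ = ‖(a : E →L[𝕜] E) Ψ‖) (a : A) :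
    (A.orbitMap Φ).extendOfNorm (A.orbitMapCyclic Ψ) (A.orbitMapCyclic Ψ a) =
      (a : E →L[𝕜] E) Φ :=
  LinearMap.extendOfNorm_eq (A.denseRange_orbitMapCyclic Ψ)
    ⟨1, fun b => by rw [one_mul]; exact (hnorm b).le⟩ a

variable (hnorm : ∀ a : A, ‖(a : E →L[𝕜] E) Φ‖ = ‖(a : E →L[𝕜] E) Ψ‖)

-- `extendOfNorm` factors through the kernel of `orbitMapCyclic Ψ`: this is why `a Ψ ↦ a Φ` is
-- well defined.
def orbitIsometry : A.cyclicSubspace Ψ →ₗᵢ[𝕜] E where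
  toLinearMap := ((A.orbitMap Φ).extendOfNorm (A.orbitMapCyclic Ψ)).toLinearMap
  norm_map' x := by
    refine (A.denseRange_orbitMapCyclic Ψ).induction_on x
      (isClosed_eq (by fun_prop) continuous_norm) fun a => ?_
    rw [ContinuousLinearMap.coe_coe, extendOfNorm_orbitMapCyclic hnorm]
    exact hnorm a

theorem orbitIsometry_orbitMapCyclic (a : A) :
    orbitIsometry hnorm (A.orbitMapCyclic Ψ a) = (a : E →L[𝕜] E) Φ :=
  extendOfNorm_orbitMapCyclic hnorm a

theorem orbitIsometry_map {a : E →L[𝕜] E} (ha : a ∈ A) (x : A.cyclicSubspace Ψ) :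
    orbitIsometry hnorm ⟨a x, A.mapsTo_cyclicSubspace Ψ ha x.2⟩ =
      a (orbitIsometry hnorm x) := by
  refine (A.denseRange_orbitMapCyclic Ψ).induction_on x
    (isClosed_eq (by fun_prop) (by fun_prop)) fun b => ?_
  calc orbitIsometry hnorm ⟨a ((b : E →L[𝕜] E) Ψ), _⟩
      = orbitIsometry hnorm (A.orbitMapCyclic Ψ ⟨a * b, mul_mem ha b.2⟩) := rfl
    _ = a (orbitIsometry hnorm (A.orbitMapCyclic Ψ b)) := by
      rw [orbitIsometry_orbitMapCyclic, orbitIsometry_orbitMapCyclic]; rfl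

theorem exists_partialIsometry_commute_of_inner_eq (h : ∀ a ∈ A, ⟪Ψ, a Ψ⟫_𝕜 = ⟪Φ, a Φ⟫_𝕜) :
    ∃ v : E →L[𝕜] E, (∀ a ∈ A, a * v = v * a) ∧ v * adjoint v * v = v ∧ v Ψ = Φ := by
  set W := orbitIsometry (norm_apply_eq_of_inner_eq h)
  refine ⟨W.extendByZero, fun a ha => ?_, W.extendByZero_comp_adjoint_comp_self, ?_⟩
  · have ha' : MapsTo (adjoint a) (A.cyclicSubspace Ψ) (A.cyclicSubspace Ψ) :=
      star_eq_adjoint a ▸ A.mapsTo_cyclicSubspace Ψ (star_mem ha)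
    exact (W.extendByZero_comp_of_mapsTo (A.mapsTo_cyclicSubspace Ψ ha) ha'
      (orbitIsometry_map _ ha)).symm
  · exact (W.extendByZero_apply_of_mem (A.orbitMapCyclic Ψ 1)).trans
      (orbitIsometry_orbitMapCyclic _ 1)

end StarSubalgebra

end

theorem haagDuality_partialIsometry_general {H : Type*} [NormedAddCommGroup H]
    [InnerProductSpace ℂ H] [CompleteSpace H]
    (M_A M_B : VonNeumannAlgebra H)
    (hhaag : M_B = M_A.commutant)
    (Ψ Φ : H) (hmarg : ∀ a ∈ M_A, ⟪Ψ, a Ψ⟫_ℂ = ⟪Φ, a Φ⟫_ℂ) :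
    ∃ v ∈ M_B, v * (ContinuousLinearMap.adjoint v) * v = v ∧ v Ψ = Φ := by
  obtain ⟨v, hv_comm, hv_partialIsometry, hvΨ⟩ :=
    M_A.toStarSubalgebra.exists_partialIsometry_commute_of_inner_eq hmarg
  exact ⟨v, hhaag ▸ VonNeumannAlgebra.mem_commutant_iff.2 hv_comm, hv_partialIsometry, hvΨ⟩

/-- Under Haag duality, two purifications of the same state on `M_A` are related by a
partial isometry in `M_B`. -/
theorem haagDuality_partialIsometry {H : Type*} [NormedAddCommGroup H]
    [InnerProductSpace ℂ H] [CompleteSpace H]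
    (M_A M_B : VonNeumannAlgebra H)
    (hcomm : ∀ a ∈ M_A, ∀ b ∈ M_B, a * b = b * a)
    (hhaag : M_B = M_A.commutant)
    (Ψ Φ : H) (hmarg : ∀ a ∈ M_A, ⟪Ψ, a Ψ⟫_ℂ = ⟪Φ, a Φ⟫_ℂ) :
    ∃ v ∈ M_B, v * (ContinuousLinearMap.adjoint v) * v = v ∧ v Ψ = Φ :=
  haagDuality_partialIsometry_general M_A M_B hhaag Ψ Φ hmarg
end

section
/- Let H be a complex Hilbert space, M a von Neumann algebra on H, and v ∈ M with ‖v‖ ≤ 1. Then for all vectors Ψ, Φ ∈ H and every ε > 0 there exists u ∈ M with star u * u = 1 and u * star u = 1 such that ‖⟪Ψ, u Φ⟫‖ ≥ ‖⟪Ψ, v Φ⟫‖ − ε. (Every contraction in a von Neumann algebra is a weak-operator limit of unitaries of the algebra, in the sense of matrix coefficients.) -/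
open scoped InnerProductSpace

section RussoDyeAux

variable {H : Type*} [NormedAddCommGroup H] [InnerProductSpace ℂ H] [CompleteSpace H]

private lemma commute_aeval (g a : H →L[ℂ] H) (hg : Commute g a) (q : Polynomial ℝ) :
    Commute g (Polynomial.aeval a q) := by
  induction q using Polynomial.induction_on' with
  | add p q hp hq => simpa [map_add] using hp.add_right hq
  | monomial n r =>
      simp only [Polynomial.aeval_monomial]
      have h1 : Commute g ((algebraMap ℝ (H →L[ℂ] H)) r) := (Algebra.commutes r g).symm
      exact h1.mul_right (hg.pow_right n)

private lemma commute_cfc (a g : H →L[ℂ] H) (hg : Commute g a)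
    (f : ℝ → ℝ) : Commute g (cfc f a) := by
  refine cfc_cases (fun x => Commute g x) a f (Commute.zero_right g) fun hf hpa => ?_
  set σ : Set ℝ := spectrum ℝ a with hσ
  have hCl : IsClosed {x : H →L[ℂ] H | Commute g x} := by
    have : {x : H →L[ℂ] H | Commute g x} = {x | g * x - x * g = 0} := by
      ext x; simp [Commute, SemiconjBy, sub_eq_zero]
    rw [this]
    exact isClosed_eq ((continuous_const.mul continuous_id).sub
      (continuous_id.mul continuous_const)) continuous_const
  have key : ∀ q : Polynomial ℝ, Commute g (cfcHom hpa (q.toContinuousMapOn σ)) := by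
    intro q
    let ψ : Polynomial ℝ →ₐ[ℝ] (H →L[ℂ] H) :=
      ((cfcHom hpa : C(σ, ℝ) →⋆ₐ[ℝ] (H →L[ℂ] H)).toAlgHom).comp
        (Polynomial.toContinuousMapOnAlgHom σ)
    have h1 : ψ q = Polynomial.aeval (ψ Polynomial.X) q := by
      have := Polynomial.aeval_algHom_apply ψ Polynomial.X q
      rw [Polynomial.aeval_X_left_apply] at this
      exact this.symm
    have h2 : (Polynomial.toContinuousMapOnAlgHom σ) Polynomial.X
        = (ContinuousMap.id ℝ).restrict σ := by
      ext x; simp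
    have hψ : ψ Polynomial.X = a := by
      show cfcHom hpa ((Polynomial.toContinuousMapOnAlgHom σ) Polynomial.X) = a
      rw [h2]; exact cfcHom_id hpa
    have : cfcHom hpa (q.toContinuousMapOn σ) = ψ q := rfl
    rw [this, h1, hψ]
    exact commute_aeval g a hg q
  have hdense : (polynomialFunctions σ).topologicalClosure = ⊤ :=
    polynomialFunctions.topologicalClosure σ
  have hmem : (⟨σ.restrict f, hf.restrict⟩ : C(σ, ℝ)) ∈
      closure ((polynomialFunctions σ : Subalgebra ℝ C(σ, ℝ)) : Set C(σ, ℝ)) :=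
by
    have h4 : (⟨σ.restrict f, hf.restrict⟩ : C(σ, ℝ)) ∈ (polynomialFunctions σ).topologicalClosure := by
      rw [hdense]; exact Algebra.mem_top
    exact h4
  have himg : cfcHom hpa (⟨σ.restrict f, hf.restrict⟩ : C(σ, ℝ)) ∈
      closure (cfcHom hpa '' ((polynomialFunctions σ : Subalgebra ℝ C(σ, ℝ)) : Set C(σ, ℝ))) :=
    image_closure_subset_closure_image (cfcHom_continuous hpa) (Set.mem_image_of_mem _ hmem)
  refine hCl.closure_subset_iff.mpr ?_ himg
  rintro x ⟨p, hp, rfl⟩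
  rw [polynomialFunctions_coe] at hp
  obtain ⟨q, rfl⟩ := hp
  exact key q

private lemma mem_cfc' (M : VonNeumannAlgebra H) (a : H →L[ℂ] H) (haM : a ∈ M)
    (f : ℝ → ℝ) : cfc f a ∈ M := by
  have : cfc f a ∈ M.commutant.commutant := by
    rw [VonNeumannAlgebra.mem_commutant_iff]
    intro g hgmem
    exact commute_cfc a g (VonNeumannAlgebra.mem_commutant_iff.mp hgmem a haM).symm f
  rwa [VonNeumannAlgebra.commutant_commutant] at this

private lemma mem_inv' (M : VonNeumannAlgebra H) (a : H →L[ℂ] H) (haM : a ∈ M)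
    (h : IsUnit a) : (↑h.unit⁻¹ : H →L[ℂ] H) ∈ M := by
  have key : ∀ g ∈ M.commutant, g * ↑h.unit⁻¹ = ↑h.unit⁻¹ * g := by
    intro g hgmem
    have hc : a * g = g * a := VonNeumannAlgebra.mem_commutant_iff.mp hgmem a haM
    have h1 : (↑h.unit⁻¹ : H →L[ℂ] H) * a = 1 := by
      simpa [IsUnit.unit_spec] using h.unit.inv_mul
    have h2 : a * (↑h.unit⁻¹ : H →L[ℂ] H) = 1 := by
      simpa [IsUnit.unit_spec] using h.unit.mul_inv
    calc g * ↑h.unit⁻¹ = (↑h.unit⁻¹ * a) * g * ↑h.unit⁻¹ := by rw [h1, one_mul]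
      _ = ↑h.unit⁻¹ * (a * g) * ↑h.unit⁻¹ := by noncomm_ring
      _ = ↑h.unit⁻¹ * (g * a) * ↑h.unit⁻¹ := by rw [hc]
      _ = ↑h.unit⁻¹ * g * (a * ↑h.unit⁻¹) := by noncomm_ring
      _ = ↑h.unit⁻¹ * g := by rw [h2, mul_one]
  have : (↑h.unit⁻¹ : H →L[ℂ] H) ∈ M.commutant.commutant := by
    rw [VonNeumannAlgebra.mem_commutant_iff]; exact key
  rwa [VonNeumannAlgebra.commutant_commutant] at this

private lemma norm_le_one_of_unitary' (u : H →L[ℂ] H) (h : star u * u = 1) : ‖u‖ ≤ 1 := by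
  have h1 : ‖star u * u‖ = ‖u‖ * ‖u‖ := CStarRing.norm_star_mul_self
  rw [h] at h1
  have h2 : ‖(1 : H →L[ℂ] H)‖ ≤ 1 := by
    rw [ContinuousLinearMap.one_def]; exact ContinuousLinearMap.norm_id_le
  nlinarith [norm_nonneg u]

set_option maxHeartbeats 1000000 in
private lemma mean_two' [Nontrivial H] (M : VonNeumannAlgebra H) (b : H →L[ℂ] H)
    (hbM : b ∈ M) (hb : IsUnit b) (hnb : ‖b‖ ≤ 1) :
    ∃ w₁ w₂ : H →L[ℂ] H, w₁ ∈ M ∧ w₂ ∈ M ∧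
      (star w₁ * w₁ = 1 ∧ w₁ * star w₁ = 1) ∧ (star w₂ * w₂ = 1 ∧ w₂ * star w₂ = 1) ∧
      w₁ + w₂ = b + b := by
  set c : H →L[ℂ] H := star b * b with hc
  have hc0 : (0 : H →L[ℂ] H) ≤ c := star_mul_self_nonneg b
  have hcsa : IsSelfAdjoint c := hc0.isSelfAdjoint
  have hcM : c ∈ M := mul_mem (star_mem hbM) hbM
  have hcU : IsUnit c := hb.star.mul hb
  have hcn : ‖c‖ ≤ 1 := by
    have h1 : ‖star b * b‖ = ‖b‖ * ‖b‖ := CStarRing.norm_star_mul_self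
    rw [← hc] at h1; nlinarith [norm_nonneg b]
  have hcspec : ∀ x ∈ spectrum ℝ c, 0 ≤ x := fun x hx => spectrum_nonneg_of_nonneg hc0 hx
  have hc_nz : ∀ x ∈ spectrum ℝ c, x ≠ 0 := by
    intro x hx
    have h0 : (0 : ℝ) ∉ spectrum ℝ c := spectrum.zero_notMem ℝ hcU
    exact fun h => h0 (h ▸ hx)
  -- s = sqrt c
  set s : H →L[ℂ] H := cfc Real.sqrt c with hs
  have hsM : s ∈ M := mem_cfc' M c hcM _
  have hs0 : (0 : H →L[ℂ] H) ≤ s := cfc_nonneg (fun x _ => Real.sqrt_nonneg x)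
  have hssa : IsSelfAdjoint s := hs0.isSelfAdjoint
  have hss : s * s = c := by
    rw [hs, ← cfc_mul Real.sqrt Real.sqrt c]
    rw [cfc_congr (g := fun x : ℝ => x) (fun x hx => Real.mul_self_sqrt (hcspec x hx))]
    exact cfc_id' ℝ c
  have hsU : IsUnit s := by
    rw [hs, isUnit_cfc_iff Real.sqrt c]
    exact fun x hx =>
      Real.sqrt_ne_zero'.mpr (lt_of_le_of_ne (hcspec x hx) (Ne.symm (hc_nz x hx)))
  have hsn : ‖s‖ ≤ 1 := by
    have h1 : ‖star s * s‖ = ‖s‖ * ‖s‖ := CStarRing.norm_star_mul_self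
    rw [hssa.star_eq, hss] at h1
    nlinarith [norm_nonneg s]
  have hsspec : ∀ x ∈ spectrum ℝ s, x ^ 2 ≤ 1 := by
    intro x hx
    have h1 := spectrum.norm_le_norm_of_mem hx
    have h2 : |x| ≤ 1 := le_trans h1 hsn
    nlinarith [abs_nonneg x, sq_abs x]
  -- t = sqrt (1 - s^2)
  set t : H →L[ℂ] H := cfc (fun x : ℝ => Real.sqrt (1 - x ^ 2)) s with ht
  have htM : t ∈ M := mem_cfc' M s hsM _
  have ht0 : (0 : H →L[ℂ] H) ≤ t := cfc_nonneg (fun x _ => Real.sqrt_nonneg _)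
  have htsa : IsSelfAdjoint t := ht0.isSelfAdjoint
  have hst : Commute s t := by
    conv_lhs => rw [← cfc_id ℝ s]
    exact cfc_commute_cfc _ _ _
  have hstt : s * s + t * t = 1 := by
    have h1 : t * t = cfc (fun x : ℝ => 1 - x ^ 2) s := by
      rw [ht, ← cfc_mul _ _ s]
      exact cfc_congr fun x hx => Real.mul_self_sqrt (by nlinarith [hsspec x hx])
    have h2 : s * s = cfc (fun x : ℝ => x * x) s := by
      conv_lhs => rw [← cfc_id' ℝ s]
      rw [← cfc_mul _ _ s]
    rw [h1, h2, ← cfc_add s _ _]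
    rw [cfc_congr (g := fun _ : ℝ => (1 : ℝ)) (fun x _ => by ring)]
    exact cfc_const_one ℝ s
  -- w = s + I t
  set w : H →L[ℂ] H := s + Complex.I • t with hw
  have hwM : w ∈ M := add_mem hsM (M.toStarSubalgebra.smul_mem htM Complex.I)
  have hwstar : star w = s - Complex.I • t := by
    rw [hw, star_add, star_smul, hssa.star_eq, htsa.star_eq]
    simp [Complex.conj_I, sub_eq_add_neg, neg_smul]
  have expand1 : (s - Complex.I • t) * (s + Complex.I • t) = s * s + t * t := by
    have : (s - Complex.I • t) * (s + Complex.I • t)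
        = s * s + Complex.I • (s * t) - Complex.I • (t * s)
          - (Complex.I * Complex.I) • (t * t) := by
      simp only [mul_add, mul_sub, sub_mul, add_mul, smul_mul_assoc, mul_smul_comm,
        smul_smul, smul_add, smul_sub]
      abel
    rw [this, hst.eq, Complex.I_mul_I, neg_smul, one_smul, sub_neg_eq_add]
    abel
  have expand2 : (s + Complex.I • t) * (s - Complex.I • t) = s * s + t * t := by
    have : (s + Complex.I • t) * (s - Complex.I • t)
        = s * s - Complex.I • (s * t) + Complex.I • (t * s)
          - (Complex.I * Complex.I) • (t * t) := by
      simp only [mul_add, mul_sub, sub_mul, add_mul, smul_mul_assoc, mul_smul_comm,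
        smul_smul, smul_add, smul_sub]
      abel
    rw [this, hst.eq, Complex.I_mul_I, neg_smul, one_smul, sub_neg_eq_add]
    abel
  have hwu1 : star w * w = 1 := by rw [hwstar, hw, expand1, hstt]
  have hwu2 : w * star w = 1 := by rw [hwstar, hw, expand2, hstt]
  have hwsum : w + star w = s + s := by
    rw [hwstar, hw]; abel
  -- e = s⁻¹, u = b * e
  set e : H →L[ℂ] H := ↑hsU.unit⁻¹ with he
  have heM : e ∈ M := mem_inv' M s hsM hsU
  have hes : e * s = 1 := by rw [he]; simpa using hsU.unit.inv_mul
  have hse : s * e = 1 := by rw [he]; simpa using hsU.unit.mul_inv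
  have hestar : star e = e := by
    have h1 : star e * s = 1 := by
      have := congrArg star hse
      rwa [star_mul, hssa.star_eq, star_one] at this
    calc star e = star e * (s * e) := by rw [hse, mul_one]
      _ = (star e * s) * e := by rw [mul_assoc]
      _ = e := by rw [h1, one_mul]
  set u : H →L[ℂ] H := b * e with hu
  have huM : u ∈ M := mul_mem hbM heM
  have huu1 : star u * u = 1 := by
    have h1 : star u * u = star e * (star b * b) * e := by
      rw [hu, star_mul]; noncomm_ring
    rw [h1, hestar, ← hc, ← hss]
    calc e * (s * s) * e = (e * s) * (s * e) := by noncomm_ring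
      _ = 1 := by rw [hes, hse, one_mul]
  have huU : IsUnit u := hb.mul (hsU.unit⁻¹.isUnit)
  have huu2 : u * star u = 1 := by
    obtain ⟨k, hk⟩ := huU
    have h1 : star u = ↑k⁻¹ := by
      have : star u * ↑k = 1 := by rw [hk]; exact huu1
      calc star u = star u * (↑k * ↑k⁻¹) := by rw [k.mul_inv, mul_one]
        _ = (star u * ↑k) * ↑k⁻¹ := by rw [mul_assoc]
        _ = ↑k⁻¹ := by rw [this, one_mul]
    rw [h1, ← hk]
    exact k.mul_inv
  -- final unitaries
  refine ⟨u * w, u * star w, mul_mem huM hwM, mul_mem huM (star_mem hwM), ⟨?_, ?_⟩, ⟨?_, ?_⟩, ?_⟩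
  · rw [star_mul]
    calc star w * star u * (u * w) = star w * (star u * u) * w := by noncomm_ring
      _ = 1 := by rw [huu1, mul_one, hwu1]
  · calc u * w * (star (u * w)) = u * (w * star w) * star u := by rw [star_mul]; noncomm_ring
      _ = 1 := by rw [hwu2, mul_one, huu2]
  · rw [star_mul, star_star]
    calc w * star u * (u * star w) = w * (star u * u) * star w := by noncomm_ring
      _ = 1 := by rw [huu1, mul_one, hwu2]
  · rw [star_mul, star_star]
    calc u * star w * (w * star u) = u * (star w * w) * star u := by noncomm_ring
      _ = 1 := by rw [hwu1, mul_one, huu2]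
  · have hbs : u * s = b := by
      rw [hu, mul_assoc, hes, mul_one]
    have hfin : u * w + u * star w = u * s + u * s := by
      rw [hwstar, hw]
      simp only [mul_add, mul_sub]
      abel
    rw [hfin, hbs]

private lemma isUnit_smul' (r : ℂ) (hr : r ≠ 0) {x : H →L[ℂ] H} (hx : IsUnit x) :
    IsUnit (r • x) := by
  rw [Algebra.smul_def]
  exact ((hr.isUnit).map (algebraMap ℂ (H →L[ℂ] H))).mul hx

private lemma half_sum (x : H →L[ℂ] H) :
    (2 : ℂ)⁻¹ • x + (2 : ℂ)⁻¹ • x = x := by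
  rw [← add_smul]; norm_num

set_option maxHeartbeats 1000000 in
private lemma sum_unitaries' [Nontrivial H] (M : VonNeumannAlgebra H) (c : H →L[ℂ] H)
    (hcM : c ∈ M) (hcn : ‖c‖ < 1) (k : ℕ) :
    ∃ u : Fin (k + 3) → (H →L[ℂ] H),
      (∀ i, u i ∈ M ∧ star (u i) * u i = 1 ∧ u i * star (u i) = 1) ∧
      (k + 1) • c = ∑ i, u i := by
  have hone : ‖(1 : H →L[ℂ] H)‖ ≤ 1 := by
    rw [ContinuousLinearMap.one_def]; exact ContinuousLinearMap.norm_id_le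
  induction k with
  | zero =>
      have h1c : IsUnit (1 + c) := by
        have h0 : IsUnit ((1 : H →L[ℂ] H) - (-c)) :=
          (Units.oneSub (-c) (by simpa using hcn)).isUnit
        rwa [sub_neg_eq_add] at h0
      set b : H →L[ℂ] H := (2 : ℂ)⁻¹ • (1 + c) with hb
      have hbM : b ∈ M := M.toStarSubalgebra.smul_mem (add_mem (one_mem M) hcM) _
      have hbU : IsUnit b := isUnit_smul' _ (by norm_num) h1c
      have hbn : ‖b‖ ≤ 1 := by
        rw [hb, norm_smul]
        have h2 : ‖(2 : ℂ)⁻¹‖ = 2⁻¹ := by norm_num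
        have h3 : ‖1 + c‖ ≤ 2 := le_trans (norm_add_le _ _) (by nlinarith)
        rw [h2]; nlinarith [norm_nonneg (1 + c)]
      obtain ⟨w₁, w₂, hw₁M, hw₂M, hw₁u, hw₂u, hsum⟩ := mean_two' M b hbM hbU hbn
      rw [half_sum] at hsum
      refine ⟨![w₁, w₂, -1], ?_, ?_⟩
      · intro i
        fin_cases i
        · exact ⟨hw₁M, hw₁u.1, hw₁u.2⟩
        · exact ⟨hw₂M, hw₂u.1, hw₂u.2⟩
        · refine ⟨neg_mem (one_mem M), ?_, ?_⟩ <;> simp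
      · rw [Fin.sum_univ_three]
        simp only [Matrix.cons_val_zero, Matrix.cons_val_one, Matrix.head_cons,
          Matrix.cons_val_two, Matrix.tail_cons]
        have h0 : (0 + 1) • c = c := by simp
        rw [h0, hsum]
        abel
  | succ k ih =>
      obtain ⟨u, hu, hsum⟩ := ih
      set u₀ := u 0 with hu₀
      obtain ⟨h₀M, h₀1, h₀2⟩ := hu 0
      have h₀n : ‖u₀‖ ≤ 1 := norm_le_one_of_unitary' u₀ h₀1
      have h₀U : IsUnit u₀ := ⟨⟨u₀, star u₀, h₀2, h₀1⟩, rfl⟩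
      have hUc : IsUnit (u₀ + c) := by
        have hn : ‖-(star u₀ * c)‖ < 1 := by
          rw [norm_neg]
          calc ‖star u₀ * c‖ ≤ ‖star u₀‖ * ‖c‖ := norm_mul_le _ _
            _ = ‖u₀‖ * ‖c‖ := by rw [norm_star]
            _ ≤ 1 * ‖c‖ := by nlinarith [norm_nonneg c]
            _ < 1 := by rwa [one_mul]
        have h1 : IsUnit (1 + star u₀ * c) := by
          have h0 : IsUnit ((1 : H →L[ℂ] H) - (-(star u₀ * c))) :=
            (Units.oneSub _ hn).isUnit
          rwa [sub_neg_eq_add] at h0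
        have h2 : u₀ * (1 + star u₀ * c) = u₀ + c := by
          rw [mul_add, mul_one, ← mul_assoc, h₀2, one_mul]
        rw [← h2]
        exact h₀U.mul h1
      set b : H →L[ℂ] H := (2 : ℂ)⁻¹ • (u₀ + c) with hb
      have hbM : b ∈ M := M.toStarSubalgebra.smul_mem (add_mem h₀M hcM) _
      have hbU : IsUnit b := isUnit_smul' _ (by norm_num) hUc
      have hbn : ‖b‖ ≤ 1 := by
        rw [hb, norm_smul]
        have h2 : ‖(2 : ℂ)⁻¹‖ = 2⁻¹ := by norm_num
        have h3 : ‖u₀ + c‖ ≤ 2 := le_trans (norm_add_le _ _) (by nlinarith)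
        rw [h2]; nlinarith [norm_nonneg (u₀ + c)]
      obtain ⟨w₁, w₂, hw₁M, hw₂M, hw₁u, hw₂u, hsum2⟩ := mean_two' M b hbM hbU hbn
      rw [half_sum] at hsum2
      refine ⟨Fin.cons w₁ (Fin.cons w₂ (fun i : Fin (k + 2) => u i.succ)), ?_, ?_⟩
      · intro i
        refine Fin.cases ?_ (fun j => ?_) i
        · simpa using ⟨hw₁M, hw₁u.1, hw₁u.2⟩
        · refine Fin.cases ?_ (fun l => ?_) j
          · simpa using ⟨hw₂M, hw₂u.1, hw₂u.2⟩
          · simpa using hu l.succ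
      · rw [Fin.sum_univ_succ]
        rw [Fin.sum_univ_succ]
        simp only [Fin.cons_zero, Fin.cons_succ]
        have hold : (k + 1) • c = u₀ + ∑ i : Fin (k + 2), u i.succ := by
          rw [hsum, Fin.sum_univ_succ]
        have hns : (k + 1 + 1) • c = (k + 1) • c + c := succ_nsmul c (k + 1)
        calc (k + 1 + 1) • c = (u₀ + ∑ i : Fin (k + 2), u i.succ) + c := by rw [hns, hold]
          _ = (u₀ + c) + ∑ i : Fin (k + 2), u i.succ := by abel
          _ = (w₁ + w₂) + ∑ i : Fin (k + 2), u i.succ := by rw [hsum2]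
          _ = w₁ + (w₂ + ∑ i : Fin (k + 2), u i.succ) := by abel
end RussoDyeAux

set_option maxHeartbeats 1000000 in
/-- Every contraction in a von Neumann algebra is a weak-operator limit of unitaries of
the algebra, in the sense of matrix coefficients. -/
theorem contraction_weakLimit_unitaries {H : Type*} [NormedAddCommGroup H]
    [InnerProductSpace ℂ H] [CompleteSpace H]
    (M : VonNeumannAlgebra H) (v : H →L[ℂ] H) (hv : v ∈ M) (hnorm : ‖v‖ ≤ 1) :
    ∀ Ψ Φ : H, ∀ ε : ℝ, 0 < ε →
      ∃ u ∈ M, star u * u = 1 ∧ u * star u = 1 ∧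
        ‖⟪Ψ, u Φ⟫_ℂ‖ ≥ ‖⟪Ψ, v Φ⟫_ℂ‖ - ε := by
  intro Ψ Φ ε hε
  rcases subsingleton_or_nontrivial H with hH | hH
  · refine ⟨1, one_mem M, by simp, by simp, ?_⟩
    have h0 : v Φ = (1 : H →L[ℂ] H) Φ := Subsingleton.elim _ _
    rw [show (⟪Ψ, v Φ⟫_ℂ) = ⟪Ψ, (1 : H →L[ℂ] H) Φ⟫_ℂ by rw [h0]]
    linarith
  · set T := ‖⟪Ψ, v Φ⟫_ℂ‖ with hT
    set N := ‖Ψ‖ * ‖Φ‖ with hN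
    have hN0 : 0 ≤ N := mul_nonneg (norm_nonneg _) (norm_nonneg _)
    have hTN : T ≤ N := by
      calc T ≤ ‖Ψ‖ * ‖v Φ‖ := norm_inner_le_norm _ _
        _ ≤ ‖Ψ‖ * (‖v‖ * ‖Φ‖) :=
            mul_le_mul_of_nonneg_left (v.le_opNorm Φ) (norm_nonneg Ψ)
        _ ≤ N := by rw [hN]; nlinarith [norm_nonneg Ψ, norm_nonneg Φ, norm_nonneg v]
    obtain ⟨k, hk⟩ := exists_nat_gt (3 * N / ε)
    have hk3 : 3 * N < ε * ((k : ℝ) + 3) := by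
      have h1 := (div_lt_iff₀ hε).mp hk
      nlinarith
    set c : H →L[ℂ] H := ((k : ℂ) / ((k : ℂ) + 1)) • v with hcdef
    have hcM : c ∈ M := M.toStarSubalgebra.smul_mem hv _
    have hratio : ‖((k : ℂ) / ((k : ℂ) + 1))‖ = (k : ℝ) / ((k : ℝ) + 1) := by
      rw [norm_div]
      have h1 : ((k : ℂ) + 1) = ((k + 1 : ℕ) : ℂ) := by push_cast; ring
      rw [h1, Complex.norm_natCast, Complex.norm_natCast]
      push_cast; ring
    have hcn : ‖c‖ < 1 := by
      rw [hcdef, norm_smul, hratio]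
      have h1 : (k : ℝ) / ((k : ℝ) + 1) < 1 := by
        rw [div_lt_one (by positivity)]; linarith
      have h2 : 0 ≤ (k : ℝ) / ((k : ℝ) + 1) := by positivity
      nlinarith [norm_nonneg v]
    obtain ⟨u, hu, hsum⟩ := sum_unitaries' M c hcM hcn k
    have hsmul : (k + 1) • c = (k : ℂ) • v := by
      rw [hcdef, ← Nat.cast_smul_eq_nsmul ℂ, smul_smul]
      congr 1
      have h1 : ((k : ℂ) + 1) ≠ 0 := Nat.cast_add_one_ne_zero k
      push_cast
      field_simp
    obtain ⟨i, _, hmax⟩ := Finset.exists_max_image Finset.univ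
      (fun j => ‖⟪Ψ, u j Φ⟫_ℂ‖) ⟨0, Finset.mem_univ 0⟩
    refine ⟨u i, (hu i).1, (hu i).2.1, (hu i).2.2, ?_⟩
    have hinner : (k : ℝ) * T = ‖⟪Ψ, ((k + 1) • c) Φ⟫_ℂ‖ := by
      rw [hsmul, ContinuousLinearMap.smul_apply, inner_smul_right, norm_mul,
        Complex.norm_natCast]
    have hbound : ‖⟪Ψ, ((k + 1) • c) Φ⟫_ℂ‖ ≤ ((k : ℝ) + 3) * ‖⟪Ψ, u i Φ⟫_ℂ‖ := by
      rw [hsum]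
      calc ‖⟪Ψ, (∑ j, u j) Φ⟫_ℂ‖ = ‖∑ j, ⟪Ψ, u j Φ⟫_ℂ‖ := by
            rw [ContinuousLinearMap.sum_apply, inner_sum]
        _ ≤ ∑ j, ‖⟪Ψ, u j Φ⟫_ℂ‖ := norm_sum_le _ _
        _ ≤ ∑ _j : Fin (k + 3), ‖⟪Ψ, u i Φ⟫_ℂ‖ :=
            Finset.sum_le_sum (fun j _ => hmax j (Finset.mem_univ j))
        _ = ((k : ℝ) + 3) * ‖⟪Ψ, u i Φ⟫_ℂ‖ := by
            rw [Finset.sum_const, Finset.card_univ, Fintype.card_fin, nsmul_eq_mul]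
            push_cast; ring
    have hX : (0 : ℝ) ≤ ‖⟪Ψ, u i Φ⟫_ℂ‖ := norm_nonneg _
    have hkey : (k : ℝ) * T ≤ ((k : ℝ) + 3) * ‖⟪Ψ, u i Φ⟫_ℂ‖ := hinner ▸ hbound
    have hk0 : (0 : ℝ) ≤ (k : ℝ) := Nat.cast_nonneg k
    nlinarith [hkey, hk3, hTN, hX, hk0]
end

section
/- Let H be a complex Hilbert space and let M_A and M_B be von Neumann algebras on H that commute (a * b = b * a for all a ∈ M_A, b ∈ M_B) and have the Uhlmann property. Then for every vector Ψ ∈ H, the topological closure of the linear span of {a Ψ | a ∈ M_A.commutant} equals the topological closure of the linear span of {b Ψ | b ∈ M_B}. -/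
/-!
A von Neumann algebra is spanned by its unitaries, so it suffices to show that `w Ψ` lies in
`K = [M_B Ψ]` for every unitary `w` of `M_A'`; the converse inclusion is `M_B ⊆ M_A'`.
For a unit vector `Ψ`, the vector `w Ψ` induces the same state on `M_A` as `Ψ`, so the Uhlmann
property yields unitaries `u ∈ M_B` with `|⟪u* Ψ, w Ψ⟫| ≥ 1 - ε`. Since `u* Ψ` is a unit vector
of `K`, the projection of the unit vector `w Ψ` onto `K` has norm one, hence `w Ψ ∈ K`.
-/

open scoped InnerProductSpace

/-- The pair `(M_A, M_B)` of von Neumann algebras has the *Uhlmann property* if any two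
unit vectors inducing the same state on `M_A` can be mapped onto each other, up to
arbitrarily small error, by unitaries of `M_B`. -/
def UhlmannProperty {H : Type*} [NormedAddCommGroup H] [InnerProductSpace ℂ H]
    [CompleteSpace H] (M_A M_B : VonNeumannAlgebra H) : Prop :=
  ∀ Ψ Φ : H, ‖Ψ‖ = 1 → ‖Φ‖ = 1 →
    (∀ a ∈ M_A, ⟪Ψ, a Ψ⟫_ℂ = ⟪Φ, a Φ⟫_ℂ) →
    ∀ ε : ℝ, 0 < ε →
      ∃ u ∈ M_B, star u * u = 1 ∧ u * star u = 1 ∧ ‖⟪Ψ, u Φ⟫_ℂ‖ ≥ 1 - ε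

theorem Submodule.mem_of_forall_exists_norm_inner_ge {𝕜 E : Type*} [RCLike 𝕜]
    [NormedAddCommGroup E] [InnerProductSpace 𝕜 E] (K : Submodule 𝕜 E)
    [K.HasOrthogonalProjection] {v : E}
    (h : ∀ ε > 0, ∃ k ∈ K, ‖k‖ ≤ 1 ∧ ‖v‖ - ε ≤ ‖⟪k, v⟫_𝕜‖) : v ∈ K := by
  rw [K.mem_iff_norm_starProjection]
  refine le_antisymm (K.norm_starProjection_apply_le v) (le_of_forall_pos_le_add fun ε hε => ?_)
  obtain ⟨k, hk, hk₁, hkv⟩ := h ε hε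
  have : ‖⟪k, v⟫_𝕜‖ ≤ ‖K.starProjection v‖ := calc
    ‖⟪k, v⟫_𝕜‖ = ‖⟪k, K.starProjection v⟫_𝕜‖ := by
      rw [← K.inner_starProjection_left_eq_right, K.starProjection_eq_self_iff.2 hk]
    _ ≤ ‖k‖ * ‖K.starProjection v‖ := norm_inner_le_norm _ _
    _ ≤ ‖K.starProjection v‖ := mul_le_of_le_one_left (norm_nonneg _) hk₁
  linarith

section

variable {H : Type*} [NormedAddCommGroup H] [InnerProductSpace ℂ H] [CompleteSpace H]

namespace VonNeumannAlgebra

theorem isClosed (S : VonNeumannAlgebra H) : IsClosed (S : Set (H →L[ℂ] H)) := by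
  rw [← S.commutant_commutant, coe_commutant]
  exact Set.isClosed_centralizer _

theorem mem_span_unitary (S : VonNeumannAlgebra H) {a : H →L[ℂ] H} (ha : a ∈ S) :
    a ∈ Submodule.span ℂ {u | u ∈ S ∧ u ∈ unitary (H →L[ℂ] H)} := by
  have : CompleteSpace S.toStarSubalgebra := S.isClosed.completeSpace_coe
  let _ : CStarAlgebra S.toStarSubalgebra := {}
  have hspan : (⟨a, ha⟩ : S.toStarSubalgebra) ∈
      Submodule.span ℂ (unitary S.toStarSubalgebra : Set S.toStarSubalgebra) := by
    rw [CStarAlgebra.span_unitary]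
    trivial
  replace hspan := Submodule.mem_map_of_mem (f := S.toStarSubalgebra.subtype.toLinearMap) hspan
  rw [Submodule.map_span] at hspan
  refine Submodule.span_mono ?_ hspan
  rintro _ ⟨u, hu, rfl⟩
  exact ⟨u.2, Unitary.map_mem S.toStarSubalgebra.subtype hu⟩

theorem inner_apply_apply_of_mem_commutant {M : VonNeumannAlgebra H} {w a : H →L[ℂ] H}
    (hw : w ∈ M.commutant) (hwu : w ∈ unitary (H →L[ℂ] H)) (ha : a ∈ M) (Ψ : H) :
    ⟪w Ψ, a (w Ψ)⟫_ℂ = ⟪Ψ, a Ψ⟫_ℂ := by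
  have hcomm : a (w Ψ) = w (a Ψ) := DFunLike.congr_fun (mem_commutant_iff.1 hw a ha) Ψ
  rw [hcomm, ContinuousLinearMap.inner_map_map_of_mem_unitary hwu]

/-- The closed cyclic subspace `[S Ψ]`. -/
noncomputable def cyclicSubspace (S : VonNeumannAlgebra H) (Ψ : H) : Submodule ℂ H :=
  (Submodule.span ℂ {x : H | ∃ a ∈ S, a Ψ = x}).topologicalClosure

theorem isClosed_cyclicSubspace (S : VonNeumannAlgebra H) (Ψ : H) :
    IsClosed (S.cyclicSubspace Ψ : Set H) :=
  Submodule.isClosed_topologicalClosure _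

theorem apply_mem_cyclicSubspace {S : VonNeumannAlgebra H} {a : H →L[ℂ] H} (ha : a ∈ S)
    (Ψ : H) : a Ψ ∈ S.cyclicSubspace Ψ :=
  Submodule.le_topologicalClosure _ (Submodule.subset_span ⟨a, ha, rfl⟩)

theorem cyclicSubspace_mono {S T : VonNeumannAlgebra H} (h : S ≤ T) (Ψ : H) :
    S.cyclicSubspace Ψ ≤ T.cyclicSubspace Ψ :=
  Submodule.topologicalClosure_mono <| Submodule.span_mono fun _ ⟨a, ha, hx⟩ => ⟨a, h ha, hx⟩

open scoped Pointwise in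
theorem cyclicSubspace_smul (S : VonNeumannAlgebra H) {c : ℂ} (hc : c ≠ 0) (Ψ : H) :
    S.cyclicSubspace (c • Ψ) = S.cyclicSubspace Ψ := by
  have : {x : H | ∃ a ∈ S, a (c • Ψ) = x} = c • {x : H | ∃ a ∈ S, a Ψ = x} := by
    ext x
    simp [Set.mem_smul_set, map_smul]
  rw [cyclicSubspace, cyclicSubspace, this, Submodule.span_smul_eq_of_isUnit _ _ hc.isUnit]

theorem cyclicSubspace_le_of_forall_unitary {S : VonNeumannAlgebra H} {Ψ : H}
    {K : Submodule ℂ H} (hK : IsClosed (K : Set H))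
    (h : ∀ u ∈ S, u ∈ unitary (H →L[ℂ] H) → u Ψ ∈ K) : S.cyclicSubspace Ψ ≤ K := by
  refine Submodule.topologicalClosure_minimal _ (Submodule.span_le.2 ?_) hK
  rintro _ ⟨a, ha, rfl⟩
  have hspan : Submodule.span ℂ {u | u ∈ S ∧ u ∈ unitary (H →L[ℂ] H)} ≤
      K.comap (ContinuousLinearMap.apply ℂ H Ψ).toLinearMap :=
    Submodule.span_le.2 fun u hu => h u hu.1 hu.2
  exact hspan (S.mem_span_unitary ha)

end VonNeumannAlgebra

namespace UhlmannProperty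

variable {M_A M_B : VonNeumannAlgebra H}

open VonNeumannAlgebra ContinuousLinearMap in
theorem unitary_apply_mem_cyclicSubspace_of_norm_eq_one (h : UhlmannProperty M_A M_B)
    {w : H →L[ℂ] H} (hw : w ∈ M_A.commutant) (hwu : w ∈ unitary (H →L[ℂ] H)) {Ψ : H}
    (hΨ : ‖Ψ‖ = 1) : w Ψ ∈ M_B.cyclicSubspace Ψ := by
  have : CompleteSpace (M_B.cyclicSubspace Ψ) := (isClosed_cyclicSubspace _ _).completeSpace_coe
  have hwΨ : ‖w Ψ‖ = 1 := by rw [norm_map_of_mem_unitary hwu, hΨ]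
  refine (M_B.cyclicSubspace Ψ).mem_of_forall_exists_norm_inner_ge fun ε hε => ?_
  obtain ⟨u, hu, hu₁, hu₂, hΨu⟩ := h Ψ (w Ψ) hΨ hwΨ
    (fun a ha => (inner_apply_apply_of_mem_commutant hw hwu ha Ψ).symm) ε hε
  have hu' : star u ∈ unitary (H →L[ℂ] H) := Unitary.star_mem (Unitary.mem_iff.2 ⟨hu₁, hu₂⟩)
  refine ⟨star u Ψ, apply_mem_cyclicSubspace (star_mem hu) Ψ, ?_, ?_⟩
  · rw [norm_map_of_mem_unitary hu', hΨ]
  · rwa [hwΨ, star_eq_adjoint, adjoint_inner_left]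

theorem unitary_apply_mem_cyclicSubspace (h : UhlmannProperty M_A M_B)
    {w : H →L[ℂ] H} (hw : w ∈ M_A.commutant) (hwu : w ∈ unitary (H →L[ℂ] H)) (Ψ : H) :
    w Ψ ∈ M_B.cyclicSubspace Ψ := by
  obtain rfl | hΨ := eq_or_ne Ψ 0
  · rw [map_zero]
    exact zero_mem _
  have hn : (‖Ψ‖ : ℂ) ≠ 0 := by exact_mod_cast norm_ne_zero_iff.2 hΨ
  rw [← NormedSpace.norm_smul_normalize Ψ, ← Complex.coe_smul, map_smul,
    M_B.cyclicSubspace_smul hn]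
  exact Submodule.smul_mem _ _ <| h.unitary_apply_mem_cyclicSubspace_of_norm_eq_one hw hwu
    (NormedSpace.norm_normalize_eq_one_iff.2 hΨ)

end UhlmannProperty

end

/-- Under the Uhlmann property, the cyclic subspaces of `M_A.commutant` and `M_B`
coincide for every vector. -/
theorem cyclic_subspaces_eq_of_uhlmann {H : Type*} [NormedAddCommGroup H]
    [InnerProductSpace ℂ H] [CompleteSpace H]
    (M_A M_B : VonNeumannAlgebra H)
    (hcomm : ∀ a ∈ M_A, ∀ b ∈ M_B, a * b = b * a)
    (huhlmann : UhlmannProperty M_A M_B) :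
    ∀ Ψ : H,
      (Submodule.span ℂ {x : H | ∃ a ∈ M_A.commutant, a Ψ = x}).topologicalClosure =
      (Submodule.span ℂ {x : H | ∃ b ∈ M_B, b Ψ = x}).topologicalClosure := by
  intro Ψ
  have hBA : M_B ≤ M_A.commutant := fun b hb =>
    VonNeumannAlgebra.mem_commutant_iff.2 fun a ha => hcomm a ha b hb
  refine le_antisymm ?_ (VonNeumannAlgebra.cyclicSubspace_mono hBA Ψ)
  exact VonNeumannAlgebra.cyclicSubspace_le_of_forall_unitary (M_B.isClosed_cyclicSubspace Ψ)
    fun w hw hwu => huhlmann.unitary_apply_mem_cyclicSubspace hw hwu Ψ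
end

section
/- Let H be a complex Hilbert space and let M_A and M_B be von Neumann algebras on H that commute (a * b = b * a for all a ∈ M_A, b ∈ M_B). Suppose u ∈ M_A.commutant ∩ M_B.commutant satisfies star u * u = 1 and u * star u = 1, and u is not a scalar multiple of the identity. Then there exists a unit vector Ψ ∈ H such that u Ψ is not a scalar multiple of Ψ, yet ⟪u Ψ, a * b (u Ψ)⟫ = ⟪Ψ, a * b Ψ⟫ for all a ∈ M_A and b ∈ M_B; i.e., local tomography of pure states fails. -/
open scoped InnerProductSpace

/-- A linear map for which every vector is an eigenvector is a scalar. -/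
lemma clm_scalar_of_forall_eigen {H : Type*} [NormedAddCommGroup H]
    [InnerProductSpace ℂ H] (u : H →L[ℂ] H)
    (h : ∀ x : H, ∃ c : ℂ, u x = c • x) : ∃ c : ℂ, u = c • 1 := by
  by_cases hH : ∀ x : H, x = 0
  · exact ⟨0, by ext x; simp [hH x, map_zero]⟩
  push_neg at hH
  obtain ⟨x₀, hx₀⟩ := hH
  obtain ⟨c₀, hc₀⟩ := h x₀
  refine ⟨c₀, ?_⟩
  ext y
  simp only [ContinuousLinearMap.smul_apply, ContinuousLinearMap.one_apply]
  obtain ⟨cy, hcy⟩ := h y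
  rcases eq_or_ne y 0 with rfl | hy
  · simp
  by_cases hdep : ∃ t : ℂ, y = t • x₀
  · obtain ⟨t, rfl⟩ := hdep
    rw [map_smul, hc₀, smul_comm]
  · -- x₀ and y are linearly independent
    obtain ⟨c, hc⟩ := h (x₀ + y)
    rw [map_add, hc₀, hcy, smul_add] at hc
    have h1 : (c₀ - c) • x₀ + (cy - c) • y = 0 := by
      rw [sub_smul, sub_smul]
      abel_nf
      linear_combination (norm := module) hc
    by_cases hcc : c₀ = c
    · have h2 : (cy - c) • y = 0 := by
        rw [hcc, sub_self, zero_smul, zero_add] at h1; exact h1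
      rcases smul_eq_zero.mp h2 with h3 | h3
      · rw [hcy, sub_eq_zero.mp h3, ← hcc]
      · exact absurd h3 hy
    · exfalso
      have hcy' : cy - c ≠ 0 := by
        intro h0
        rw [h0, zero_smul, add_zero] at h1
        rcases smul_eq_zero.mp h1 with h3 | h3
        · exact hcc (sub_eq_zero.mp h3)
        · exact hx₀ h3
      apply hdep
      refine ⟨(cy - c)⁻¹ * -(c₀ - c), ?_⟩
      have h4 : (cy - c) • y = -((c₀ - c) • x₀) := by
        rw [eq_neg_iff_add_eq_zero, add_comm]; exact h1
      calc y = (cy - c)⁻¹ • ((cy - c) • y) := (inv_smul_smul₀ hcy' y).symm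
        _ = (cy - c)⁻¹ • (-((c₀ - c) • x₀)) := by rw [h4]
        _ = ((cy - c)⁻¹ * -(c₀ - c)) • x₀ := by
              rw [smul_neg, smul_smul, mul_neg, neg_smul]

/-- A non-scalar unitary commuting with both algebras produces two locally
indistinguishable but distinct pure states: local tomography of pure states fails. -/
theorem localTomography_fails_of_nonscalar_unitary {H : Type*} [NormedAddCommGroup H]
    [InnerProductSpace ℂ H] [CompleteSpace H]
    (M_A M_B : VonNeumannAlgebra H)
    (hcomm : ∀ a ∈ M_A, ∀ b ∈ M_B, a * b = b * a)
    (u : H →L[ℂ] H) (huA : u ∈ M_A.commutant) (huB : u ∈ M_B.commutant)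
    (huni₁ : star u * u = 1) (huni₂ : u * star u = 1)
    (hnonscalar : ¬ ∃ c : ℂ, u = c • 1) :
    ∃ Ψ : H, ‖Ψ‖ = 1 ∧ (¬ ∃ c : ℂ, u Ψ = c • Ψ) ∧
      ∀ a ∈ M_A, ∀ b ∈ M_B, ⟪u Ψ, (a * b) (u Ψ)⟫_ℂ = ⟪Ψ, (a * b) Ψ⟫_ℂ := by
  -- find a vector that is not an eigenvector of u
  have hex : ∃ x : H, ¬ ∃ c : ℂ, u x = c • x := by
    by_contra hall
    push_neg at hall
    exact hnonscalar (clm_scalar_of_forall_eigen u (fun x => hall x))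
  obtain ⟨x, hx⟩ := hex
  have hxne : x ≠ 0 := by
    rintro rfl
    exact hx ⟨0, by simp⟩
  set Ψ := (‖x‖ : ℂ)⁻¹ • x with hΨ
  have hnorm : ‖Ψ‖ = 1 := by
    simp [hΨ, norm_smul, norm_inv, inv_mul_cancel₀ (norm_ne_zero_iff.mpr hxne)]
  refine ⟨Ψ, hnorm, ?_, ?_⟩
  · rintro ⟨c, hc⟩
    apply hx
    refine ⟨c, ?_⟩
    have hn : (‖x‖ : ℂ) ≠ 0 := by
      exact_mod_cast norm_ne_zero_iff.mpr hxne
    have := hc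
    rw [hΨ, map_smul] at this
    have h2 := congrArg (fun z => (‖x‖ : ℂ) • z) this
    simp only [smul_smul, mul_inv_cancel₀ hn, one_smul] at h2
    rw [h2]
    congr 1
    field_simp
  · intro a ha b hb
    have hcommA : a * u = u * a := VonNeumannAlgebra.mem_commutant_iff.mp huA a ha
    have hcommB : b * u = u * b := VonNeumannAlgebra.mem_commutant_iff.mp huB b hb
    have hcomm' : (a * b) * u = u * (a * b) := by
      rw [mul_assoc, hcommB, ← mul_assoc, hcommA, mul_assoc]
    have h1 : (a * b) (u Ψ) = u ((a * b) Ψ) := by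
      have := congrArg (fun f : H →L[ℂ] H => f Ψ) hcomm'
      simpa using this
    rw [h1]
    have hadj : ∀ x y : H, ⟪u x, u y⟫_ℂ = ⟪x, y⟫_ℂ := by
      intro x y
      rw [← ContinuousLinearMap.adjoint_inner_right]
      have : (ContinuousLinearMap.adjoint u) (u y) = (star u * u) y := rfl
      rw [this, huni₁]
      simp
    exact hadj Ψ ((a * b) Ψ)
end

section
/- Let H be a complex Hilbert space and let M_A and M_B be von Neumann algebras on H that commute (a * b = b * a for all a ∈ M_A, b ∈ M_B), and suppose every operator x ∈ M_A.commutant ∩ M_B.commutant is a scalar multiple of the identity. If unit vectors Ψ, Φ ∈ H satisfy ⟪Ψ, a * b Ψ⟫ = ⟪Φ, a * b Φ⟫ for all a ∈ M_A and b ∈ M_B, then there exists c : ℂ with ‖c‖ = 1 and Φ = c • Ψ; i.e., pure states are determined by local correlation functions. -/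
/-
Pass to `H ⊕₂ H` and let `K` be the closed span of the vectors `(x Ψ, x Φ)` with `x = a b`,
`a ∈ M_A`, `b ∈ M_B`. It contains `(Ψ, Φ)` (take `a = b = 1`), it is orthogonal to `(Ψ, -Φ)`
because the correlations of `Ψ` and `Φ` agree, and it is invariant under `a ⊕ a` for every `a`
in the *-closed set `M_A ∪ M_B`. Hence the orthogonal projection onto `K` commutes with each
`a ⊕ a`, so the lower-left entry of its block matrix lies in `M_A' ∩ M_B'` and is a scalar `c`.
Evaluating the projection on `(Ψ, 0) = ((Ψ, Φ) + (Ψ, -Φ)) / 2` gives `Φ = 2 c Ψ`.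
-/

open scoped InnerProductSpace Pointwise
open Module.End ContinuousLinearMap WithLp

theorem mul_mem_mul_of_mem_union {S M : Type*} [Semigroup M] [SetLike S M] [MulMemClass S M]
    {A B : S} (hAB : ∀ a ∈ A, ∀ b ∈ B, a * b = b * a) {g x : M}
    (hg : g ∈ (A : Set M) ∪ B) (hx : x ∈ (A : Set M) * B) : g * x ∈ (A : Set M) * B := by
  obtain ⟨a, ha, b, hb, rfl⟩ := hx
  rcases hg with hg | hg
  · exact ⟨g * a, mul_mem hg ha, b, hb, mul_assoc g a b⟩
  · refine ⟨a, ha, g * b, mul_mem hg hb, ?_⟩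
    show a * (g * b) = g * (a * b)
    rw [← mul_assoc, hAB a ha g hg, mul_assoc]

namespace ContinuousLinearMap

variable {𝕜 E F : Type*} [RCLike 𝕜] [NormedAddCommGroup E] [InnerProductSpace 𝕜 E]
  [NormedAddCommGroup F] [InnerProductSpace 𝕜 F]

noncomputable def withLpProdMap (f : E →L[𝕜] E) (g : F →L[𝕜] F) :
    WithLp 2 (E × F) →L[𝕜] WithLp 2 (E × F) :=
  (prodContinuousLinearEquiv 2 𝕜 E F).symm.toContinuousLinearMap ∘L f.prodMap g ∘L
    (prodContinuousLinearEquiv 2 𝕜 E F).toContinuousLinearMap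

@[simp]
theorem withLpProdMap_apply (f : E →L[𝕜] E) (g : F →L[𝕜] F) (x : WithLp 2 (E × F)) :
    f.withLpProdMap g x = toLp 2 (f x.fst, g x.snd) :=
  rfl

theorem adjoint_withLpProdMap [CompleteSpace E] [CompleteSpace F] (f : E →L[𝕜] E)
    (g : F →L[𝕜] F) : adjoint (f.withLpProdMap g) = (adjoint f).withLpProdMap (adjoint g) := by
  refine ((eq_adjoint_iff _ _).2 fun x y => ?_).symm
  simp [prod_inner_apply, adjoint_inner_left]

noncomputable def lowerLeft (T : WithLp 2 (E × F) →L[𝕜] WithLp 2 (E × F)) : E →L[𝕜] F :=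
  sndL 2 𝕜 E F ∘L T ∘L (prodContinuousLinearEquiv 2 𝕜 E F).symm.toContinuousLinearMap ∘L
    inl 𝕜 E F

@[simp]
theorem lowerLeft_apply (T : WithLp 2 (E × F) →L[𝕜] WithLp 2 (E × F)) (x : E) :
    T.lowerLeft x = (T (toLp 2 (x, 0))).snd :=
  rfl

theorem lowerLeft_comp_eq_comp_lowerLeft {T : WithLp 2 (E × F) →L[𝕜] WithLp 2 (E × F)}
    {f : E →L[𝕜] E} {g : F →L[𝕜] F}
    (h : T ∘L f.withLpProdMap g = f.withLpProdMap g ∘L T) :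
    T.lowerLeft ∘L f = g ∘L T.lowerLeft := by
  ext x
  simpa using congr(($h (toLp 2 (x, 0))).snd)

end ContinuousLinearMap

section

variable {𝕜 E : Type*} [RCLike 𝕜] [NormedAddCommGroup E] [InnerProductSpace 𝕜 E]

theorem Submodule.commute_starProjection_of_mem_invtSubmodule [CompleteSpace E]
    (K : Submodule 𝕜 E) [K.HasOrthogonalProjection] {T : E →L[𝕜] E}
    (h : K ∈ invtSubmodule T) (h' : K ∈ invtSubmodule (adjoint T)) :
    Commute K.starProjection T := by
  refine K.isIdempotentElem_starProjection.commute_iff.2 ⟨?_, ?_⟩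
  · rwa [range_starProjection]
  · rw [ker_starProjection]
    exact orthogonal_mem_invtSubmodule h'

noncomputable def jointOrbitSpan (S : Set (E →L[𝕜] E)) (v w : E) :
    Submodule 𝕜 (WithLp 2 (E × E)) :=
  Submodule.span 𝕜 ((fun x => toLp 2 (x v, x w)) '' S)

variable {S : Set (E →L[𝕜] E)} {v w : E}

theorem jointOrbitSpan_mem_invtSubmodule {T : E →L[𝕜] E} (h : ∀ x ∈ S, T * x ∈ S) :
    jointOrbitSpan S v w ∈ invtSubmodule (T.withLpProdMap T) := by
  refine Submodule.span_le.2 ?_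
  rintro _ ⟨x, hx, rfl⟩
  exact Submodule.subset_span ⟨T * x, h x hx, rfl⟩

theorem toLp_mem_jointOrbitSpan (hS : 1 ∈ S) : toLp 2 (v, w) ∈ jointOrbitSpan S v w :=
  Submodule.subset_span ⟨1, hS, rfl⟩

theorem toLp_neg_mem_orthogonal_jointOrbitSpan
    (h : ∀ x ∈ S, ⟪v, x v⟫_𝕜 = ⟪w, x w⟫_𝕜) :
    toLp 2 (v, -w) ∈ (jointOrbitSpan S v w)ᗮ := by
  refine (Submodule.mem_orthogonal' _ _).2 fun y hy => ?_
  refine Submodule.span_le (p := LinearMap.ker (innerₛₗ 𝕜 (toLp 2 (v, -w)))).2 ?_ hy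
  rintro _ ⟨x, hx, rfl⟩
  simp [prod_inner_apply, h x hx]

theorem commute_starProjection_jointOrbitSpan [CompleteSpace E] {T : E →L[𝕜] E}
    (hT : ∀ x ∈ S, T * x ∈ S) (hT' : ∀ x ∈ S, star T * x ∈ S) :
    Commute (jointOrbitSpan S v w).topologicalClosure.starProjection (T.withLpProdMap T) := by
  refine Submodule.commute_starProjection_of_mem_invtSubmodule _
    (Submodule.topologicalClosure_mem_invtSubmodule (jointOrbitSpan_mem_invtSubmodule hT)) ?_
  rw [adjoint_withLpProdMap, ← star_eq_adjoint]
  exact Submodule.topologicalClosure_mem_invtSubmodule (jointOrbitSpan_mem_invtSubmodule hT')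

theorem exists_mem_centralizer_apply_eq_of_inner_eq [CompleteSpace E] {G : Set (E →L[𝕜] E)}
    (hG : ∀ g ∈ G, star g ∈ G) (hGS : ∀ g ∈ G, ∀ x ∈ S, g * x ∈ S) (hS : 1 ∈ S)
    (hcorr : ∀ x ∈ S, ⟪v, x v⟫_𝕜 = ⟪w, x w⟫_𝕜) :
    ∃ X ∈ G.centralizer, X v = w := by
  set P := (jointOrbitSpan S v w).topologicalClosure.starProjection
  refine ⟨(2 : 𝕜) • P.lowerLeft, Set.mem_centralizer_iff.2 fun g hg => ?_, ?_⟩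
  · have hPg :=
      (commute_starProjection_jointOrbitSpan (v := v) (w := w) (hGS g hg) (hGS _ (hG g hg))).eq
    rw [mul_smul_comm, smul_mul_assoc, mul_def, mul_def, lowerLeft_comp_eq_comp_lowerLeft hPg]
  · have hsum : P (toLp 2 (v, w)) = toLp 2 (v, w) :=
      Submodule.starProjection_eq_self_iff.2
        (Submodule.le_topologicalClosure _ (toLp_mem_jointOrbitSpan hS))
    have hdiff : P (toLp 2 (v, -w)) = 0 := by
      rw [Submodule.starProjection_apply_eq_zero_iff, Submodule.orthogonal_closure]
      exact toLp_neg_mem_orthogonal_jointOrbitSpan hcorr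
    have hsplit : (2 : 𝕜) • toLp 2 (v, 0) = toLp 2 (v, w) + toLp 2 (v, -w) := by
      rw [← toLp_add, ← toLp_smul]
      simp [two_smul]
    calc (2 : 𝕜) • P.lowerLeft v = (P ((2 : 𝕜) • toLp 2 (v, 0))).snd := by simp
      _ = w := by simp [hsplit, hsum, hdiff]

end

/-- Under local tomography, pure states are determined by their local correlation
functions, up to a global phase. -/
theorem pure_state_localTomography {H : Type*} [NormedAddCommGroup H]
    [InnerProductSpace ℂ H] [CompleteSpace H]
    (M_A M_B : VonNeumannAlgebra H)
    (hcomm : ∀ a ∈ M_A, ∀ b ∈ M_B, a * b = b * a)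
    (htomo : ∀ x : H →L[ℂ] H, x ∈ M_A.commutant → x ∈ M_B.commutant →
      ∃ c : ℂ, x = c • 1)
    (Ψ Φ : H) (hΨ : ‖Ψ‖ = 1) (hΦ : ‖Φ‖ = 1)
    (hcorr : ∀ a ∈ M_A, ∀ b ∈ M_B, ⟪Ψ, (a * b) Ψ⟫_ℂ = ⟪Φ, (a * b) Φ⟫_ℂ) :
    ∃ c : ℂ, ‖c‖ = 1 ∧ Φ = c • Ψ := by
  have hstar : ∀ g ∈ (M_A ∪ M_B : Set (H →L[ℂ] H)),
      star g ∈ (M_A ∪ M_B : Set (H →L[ℂ] H)) := by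
    rintro g (hg | hg)
    exacts [Or.inl (star_mem hg), Or.inr (star_mem hg)]
  obtain ⟨X, hX, hXΨ⟩ := exists_mem_centralizer_apply_eq_of_inner_eq hstar
    (fun _ hg _ hx => mul_mem_mul_of_mem_union hcomm hg hx)
    ⟨1, one_mem M_A, 1, one_mem M_B, one_mul 1⟩
    (by rintro _ ⟨a, ha, b, hb, rfl⟩; exact hcorr a ha b hb)
  rw [Set.centralizer_union, ← VonNeumannAlgebra.coe_commutant,
    ← VonNeumannAlgebra.coe_commutant] at hX
  obtain ⟨c, rfl⟩ := htomo X hX.1 hX.2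
  have hΦΨ : Φ = c • Ψ := by simpa using hXΨ.symm
  refine ⟨c, ?_, hΦΨ⟩
  rwa [hΦΨ, norm_smul, hΨ, mul_one] at hΦ
end
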